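/- Let S ⊆ [0, ∞) be closed with complement S* = [0, ∞) \ S open and additive, S bounded with L = sup S, and h_S defined as the signed distance to ∂S (positive on interior of S, negative on S*, zero on ∂S), restricted to [0, L]. Then for every s* ∈ S* and every x with 0 ≤ x < x + s* ≤ L, we have h_S(x + s*) < h_S(x). -/

import Mathlib

/-!
Write `S* = [0, ∞) \ S` and `F = ∂S`; as `S*` is open inside `[0, ∞)`, `0 ∈ F`. An open additive
set absorbs its closure under translation, so `z + s* ∈ S*` for every `z ≥ 0` outside the interior
of `S`. On the line, a segment from a point of `S` to a point outside `S` meets `F`.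
If `x + s* ∈ S`, the point `f ∈ F` nearest to `x` has `f + s* ∉ S`, so some point of `F` is
strictly closer to `x + s*` than `f + s*`. If `x ∈ S*` and `f ∈ F` is nearest to `x + s*`, either
`f < s*`, and `0 ∈ F` is closer to `x`, or `f - s*` lies in the interior of `S` and some point of
`F` is strictly closer to `x` than `f - s*`. The other cases follow from the signs of `h_S`.
-/

open Set Metric

theorem IsPreconnected.inter_frontier_nonempty {X : Type*} [TopologicalSpace X] {s t : Set X}
    (hs : IsPreconnected s) (ht : (s ∩ t).Nonempty) (h't : (s \ t).Nonempty) :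
    (s ∩ frontier t).Nonempty := by
  by_contra hF
  have hcl : closure t ∩ s ⊆ interior t := fun x ⟨hxc, hxs⟩ =>
    by_contra fun hxi => hF ⟨x, hxs, hxc, hxi⟩
  obtain ⟨x, hxs, hxt⟩ := ht
  have hsub : s ⊆ interior t := hs.subset_of_closure_inter_subset isOpen_interior
    ⟨x, hxs, hcl ⟨subset_closure hxt, hxs⟩⟩
    ((inter_subset_inter_left _ (closure_mono interior_subset)).trans hcl)
  obtain ⟨y, hys, hyt⟩ := h't
  exact hyt (interior_subset (hsub hys))

theorem IsOpen.add_mem_of_mem_closure {G : Type*} [TopologicalSpace G] [AddCommGroup G]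
    [IsTopologicalAddGroup G] {T : Set G} (hopen : IsOpen T)
    (hadd : ∀ p ∈ T, ∀ q ∈ T, p + q ∈ T) {s z : G} (hs : s ∈ T) (hz : z ∈ closure T) :
    z + s ∈ T := by
  have hnhds : (fun u => z + s - u) ⁻¹' T ∈ nhds z :=
    (continuous_const.sub continuous_id).continuousAt.preimage_mem_nhds
      (by simpa using hopen.mem_nhds hs)
  obtain ⟨u, hu, huT⟩ := mem_closure_iff_nhds.1 hz _ hnhds
  simpa using hadd u huT _ hu

namespace Real

theorem infDist_frontier_lt_dist {S : Set ℝ} {a b : ℝ} (ha : a ∈ S) (hb : b ∉ S)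
    (hbF : b ∉ frontier S) : infDist a (frontier S) < dist a b := by
  obtain ⟨g, hg, hgF⟩ :=
    isPreconnected_uIcc.inter_frontier_nonempty ⟨a, left_mem_uIcc, ha⟩ ⟨b, right_mem_uIcc, hb⟩
  have hgb : g ≠ b := fun h => hbF (h ▸ hgF)
  calc infDist a (frontier S) ≤ dist a g := infDist_le_dist_of_mem hgF
    _ < dist a b := by
      rw [dist_eq, dist_eq]
      rcases mem_uIcc.1 hg with ⟨h₁, h₂⟩ | ⟨h₁, h₂⟩
      · rw [abs_of_nonpos (by linarith), abs_of_nonpos (by linarith)]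
        linarith [lt_of_le_of_ne h₂ hgb]
      · rw [abs_of_nonneg (by linarith), abs_of_nonneg (by linarith)]
        linarith [lt_of_le_of_ne' h₁ hgb]

variable {S : Set ℝ}

theorem zero_mem_frontier (hSsub : S ⊆ Ici 0) (hopen : IsOpen (Ici 0 \ S)) :
    (0 : ℝ) ∈ frontier S := by
  have hint : ∀ {T : Set ℝ}, T ⊆ Ici 0 → (0 : ℝ) ∉ interior T := fun hT h0 =>
    lt_irrefl (0 : ℝ) (by simpa using interior_mono hT h0)
  have h0S : (0 : ℝ) ∈ S := by
    by_contra h0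
    exact hint sdiff_subset (by rw [hopen.interior_eq]; exact ⟨mem_Ici.2 le_rfl, h0⟩)
  exact ⟨subset_closure h0S, hint hSsub⟩

theorem add_mem_of_notMem_interior (hopen : IsOpen (Ici 0 \ S))
    (hadd : ∀ p ∈ Ici 0 \ S, ∀ q ∈ Ici 0 \ S, p + q ∈ Ici 0 \ S) {s z : ℝ}
    (hs : s ∈ Ici 0 \ S) (hz : 0 ≤ z) (hzS : z ∉ interior S) : z + s ∈ Ici 0 \ S := by
  rcases hz.eq_or_lt with rfl | hz
  · rwa [zero_add]
  refine hopen.add_mem_of_mem_closure hadd hs ?_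
  have hz' : z ∈ Ioi 0 ∩ closure Sᶜ := ⟨hz, by rwa [closure_compl]⟩
  refine closure_mono ?_ (isOpen_Ioi.inter_closure hz')
  exact fun y hy => ⟨mem_Ici.2 (le_of_lt hy.1), hy.2⟩

theorem infDist_frontier_add_lt (hSclosed : IsClosed S) (hSsub : S ⊆ Ici 0)
    (hopen : IsOpen (Ici 0 \ S))
    (hadd : ∀ p ∈ Ici 0 \ S, ∀ q ∈ Ici 0 \ S, p + q ∈ Ici 0 \ S) {s x : ℝ}
    (hs : s ∈ Ici 0 \ S) (hxs : x + s ∈ S) :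
    infDist (x + s) (frontier S) < infDist x (frontier S) := by
  obtain ⟨f, hfF, hf⟩ :=
    isClosed_frontier.exists_infDist_eq_dist ⟨0, zero_mem_frontier hSsub hopen⟩ x
  have hfs : f + s ∈ Ici 0 \ S :=
    add_mem_of_notMem_interior hopen hadd hs (hSsub (hSclosed.frontier_subset hfF)) hfF.2
  calc infDist (x + s) (frontier S) < dist (x + s) (f + s) :=
        infDist_frontier_lt_dist hxs hfs.2 fun h => hfs.2 (hSclosed.frontier_subset h)
    _ = infDist x (frontier S) := by rw [dist_add_right, hf]

theorem infDist_frontier_lt_add (hSclosed : IsClosed S) (hSsub : S ⊆ Ici 0)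
    (hopen : IsOpen (Ici 0 \ S))
    (hadd : ∀ p ∈ Ici 0 \ S, ∀ q ∈ Ici 0 \ S, p + q ∈ Ici 0 \ S) {s x : ℝ}
    (hs : s ∈ Ici 0 \ S) (hx : x ∈ Ici 0 \ S) :
    infDist x (frontier S) < infDist (x + s) (frontier S) := by
  have h0 := zero_mem_frontier hSsub hopen
  obtain ⟨f, hfF, hf⟩ := isClosed_frontier.exists_infDist_eq_dist ⟨0, h0⟩ (x + s)
  rw [hf]
  rcases lt_or_ge f s with hfs | hfs
  · calc infDist x (frontier S) ≤ dist x 0 := infDist_le_dist_of_mem h0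
      _ = x := by rw [dist_zero_right, norm_of_nonneg hx.1]
      _ < x + s - f := by linarith
      _ ≤ dist (x + s) f := le_abs_self _
  · have hint : f - s ∈ interior S := by
      by_contra hnot
      have := add_mem_of_notMem_interior hopen hadd hs (sub_nonneg.2 hfs) hnot
      exact (sub_add_cancel f s ▸ this).2 (hSclosed.frontier_subset hfF)
    calc infDist x (frontier S) = infDist x (frontier Sᶜ) := by rw [frontier_compl]
      _ < dist x (f - s) :=
          infDist_frontier_lt_dist (S := Sᶜ) hx.2 (not_not.2 (interior_subset hint))
            (by rw [frontier_compl]; exact fun h => h.2 hint)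
      _ = dist (x + s) f := by rw [← dist_add_right x (f - s) s, sub_add_cancel]

end Real

theorem hopf_strict_decrease_general (S Sstar : Set ℝ) (hSclosed : IsClosed S)
    (hSsub : S ⊆ Set.Ici 0) (hSstar : Sstar = Set.Ici (0 : ℝ) \ S)
    (hopen : IsOpen Sstar) (hadd : ∀ p ∈ Sstar, ∀ q ∈ Sstar, p + q ∈ Sstar)
    (L : ℝ)
    (hS : ℝ → ℝ)
    (hdef_bd : ∀ x ∈ frontier S, hS x = 0)
    (hdef_int : ∀ x ∈ interior S, hS x = Metric.infDist x (frontier S))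
    (hdef_star : ∀ x ∈ Sstar, hS x = -Metric.infDist x (frontier S)) :
    ∀ sstar ∈ Sstar, ∀ x : ℝ, 0 ≤ x → x < x + sstar → x + sstar ≤ L →
      hS (x + sstar) < hS x := by
  subst hSstar
  intro s hs x hx _ _
  have hF : (frontier S).Nonempty := ⟨0, Real.zero_mem_frontier hSsub hopen⟩
  by_cases hxI : x ∈ interior S
  · have hpos : 0 < hS x := by
      rw [hdef_int x hxI]
      exact (isClosed_frontier.notMem_iff_infDist_pos hF).1 fun h => h.2 hxI
    by_cases hyS : x + s ∈ S
    · by_cases hyI : x + s ∈ interior S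
      · rw [hdef_int _ hyI, hdef_int x hxI]
        exact Real.infDist_frontier_add_lt hSclosed hSsub hopen hadd hs hyS
      · rwa [hdef_bd _ ⟨subset_closure hyS, hyI⟩]
    · rw [hdef_star _ ⟨add_nonneg hx hs.1, hyS⟩]
      linarith [infDist_nonneg (x := x + s) (s := frontier S)]
  · have hy := Real.add_mem_of_notMem_interior hopen hadd hs hx hxI
    rw [hdef_star _ hy]
    by_cases hxS : x ∈ S
    · rw [hdef_bd x ⟨subset_closure hxS, hxI⟩, neg_lt_zero]
      exact (isClosed_frontier.notMem_iff_infDist_pos hF).1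
        fun h => hy.2 (hSclosed.frontier_subset h)
    · rw [hdef_star x ⟨hx, hxS⟩, neg_lt_neg_iff]
      exact Real.infDist_frontier_lt_add hSclosed hSsub hopen hadd hs ⟨hx, hxS⟩

theorem hopf_strict_decrease (S Sstar : Set ℝ) (hSclosed : IsClosed S)
    (hSsub : S ⊆ Set.Ici 0) (hSstar : Sstar = Set.Ici (0 : ℝ) \ S)
    (hopen : IsOpen Sstar) (hadd : ∀ p ∈ Sstar, ∀ q ∈ Sstar, p + q ∈ Sstar)
    (hne : S.Nonempty) (hbdd : BddAbove S) (L : ℝ) (hL : L = sSup S)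
    (hS : ℝ → ℝ)
    (hdef_bd : ∀ x ∈ frontier S, hS x = 0)
    (hdef_int : ∀ x ∈ interior S, hS x = Metric.infDist x (frontier S))
    (hdef_star : ∀ x ∈ Sstar, hS x = -Metric.infDist x (frontier S)) :
    ∀ sstar ∈ Sstar, ∀ x : ℝ, 0 ≤ x → x < x + sstar → x + sstar ≤ L →
      hS (x + sstar) < hS x :=
  hopf_strict_decrease_general S Sstar hSclosed hSsub hSstar hopen hadd L hS hdef_bd hdef_int
    hdef_star
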